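/- Let n ≥ 2, m ≥ 1, C > 0, and for J = 1,…,m let k_J ∈ {1,…,n} and p_J ∈ [1,∞). Suppose f_J : ℝ^{k_J} → [0,∞] are measurable and that for every ρ > 0 one has ∫_{S^{n−1}} ∏_J f_J(ρ·π_J(x')) dσ(x') ≤ C·∏_J ‖f_J(ρ·)‖_{L^{p_J}(B_{k_J})}, where π_J : ℝ^n → ℝ^{k_J} is a coordinate projection and B_{k_J} the unit ball. If Σ_J k_J/p_J < n, then for all R > 0: ∫_{B(0,R)} ∏_J f_J(π_J x) dx ≤ C'·R^{δ}·∏_J ‖f_J‖_{L^{p_J}(ℝ^{k_J})}, where δ = n − Σ_J k_J/p_J and C' depends only on n, C, and the p_J, k_J. -/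

import Mathlib

/-!
In polar coordinates `x = r • x'`, the integral over `B(0,R)` is
`∫₀^R r^{n-1} ∫_{S^{n-1}} F(r x') dx' dr`. The hypothesis at `ρ = r`, with the scaling
`‖f_J(r ·)‖_{L^{p_J}(B)} ≤ r^{-k_J/p_J} ‖f_J‖_{L^{p_J}}`, bounds the inner integral by
`|S^{n-1}| C r^{-Σ k_J/p_J} ∏_J ‖f_J‖_{p_J}` (the factor `|S^{n-1}|` undoes the normalization
of `dσ`). Since `δ > 0`, `∫₀^R r^{δ-1} dr = R^δ/δ`, so `C' = |S^{n-1}| C / δ` works.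
-/

open MeasureTheory Metric Set Module
open scoped ENNReal

namespace MeasureTheory.Measure

variable {E : Type*} [NormedAddCommGroup E] [NormedSpace ℝ E] [MeasurableSpace E] [BorelSpace E]
  [FiniteDimensional ℝ E] (μ : Measure E) [μ.IsAddHaarMeasure]

theorem lintegral_comp_smul_of_pos (g : E → ℝ≥0∞) {r : ℝ} (hr : 0 < r) :
    ∫⁻ x, g (r • x) ∂μ = ENNReal.ofReal ((r ^ finrank ℝ E)⁻¹) * ∫⁻ x, g x ∂μ := by
  let e : E ≃ᵐ E := (Homeomorph.smul (Units.mk0 r hr.ne')).toMeasurableEquiv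
  calc ∫⁻ x, g (r • x) ∂μ = ∫⁻ x, g x ∂map e μ := (lintegral_map_equiv g e).symm
    _ = _ := by
      rw [show ⇑e = (r • ·) from rfl, map_addHaar_smul μ hr.ne', lintegral_smul_measure,
        abs_of_pos (by positivity), smul_eq_mul]

theorem setLIntegral_comp_smul_rpow_le (g : E → ℝ≥0∞) (s : Set E) {r q : ℝ} (hr : 0 < r)
    (hq : 0 ≤ q) :
    (∫⁻ x in s, g (r • x) ∂μ) ^ q ≤
      ENNReal.ofReal (r ^ (-(finrank ℝ E * q))) * (∫⁻ x, g x ∂μ) ^ q := by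
  calc (∫⁻ x in s, g (r • x) ∂μ) ^ q ≤ (∫⁻ x, g (r • x) ∂μ) ^ q :=
        ENNReal.rpow_le_rpow (setLIntegral_le_lintegral _ _) hq
    _ = _ := by
      rw [lintegral_comp_smul_of_pos μ g hr, ENNReal.mul_rpow_of_nonneg _ _ hq,
        ENNReal.ofReal_rpow_of_nonneg (by positivity) hq, ← Real.rpow_natCast,
        ← Real.rpow_neg hr.le, ← Real.rpow_mul hr.le, neg_mul]

theorem lintegral_toSphere_indicator_ball_smul (F : E → ℝ≥0∞) {r : ℝ} (hr : 0 < r) (R : ℝ) :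
    ∫⁻ x : sphere (0 : E) 1, (ball 0 R).indicator F (r • (x : E)) ∂μ.toSphere =
      (Iio R).indicator (fun r => ∫⁻ x : sphere (0 : E) 1, F (r • (x : E)) ∂μ.toSphere) r := by
  have hmem (x : sphere (0 : E) 1) : r • (x : E) ∈ ball 0 R ↔ r ∈ Iio R := by
    rw [mem_ball_zero_iff, norm_smul, norm_eq_of_mem_sphere x, mul_one,
      Real.norm_of_nonneg hr.le, mem_Iio]
  by_cases hrR : r ∈ Iio R
  · simp only [indicator_of_mem hrR, indicator_of_mem ((hmem _).2 hrR)]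
  · simp [indicator_of_notMem hrR, indicator_of_notMem (mt (hmem _).1 hrR)]

variable [Nontrivial E]

theorem lintegral_eq_setLIntegral_Ioi_toSphere (G : E → ℝ≥0∞) (hG : Measurable G) :
    ∫⁻ x, G x ∂μ = ∫⁻ r in Ioi (0 : ℝ), ENNReal.ofReal (r ^ (finrank ℝ E - 1)) *
      ∫⁻ x : sphere (0 : E) 1, G (r • (x : E)) ∂μ.toSphere := by
  let e := (homeomorphUnitSphereProd E).toMeasurableEquiv
  have hG' : Measurable fun q : sphere (0 : E) 1 × ℝ => G (q.2 • (q.1 : E)) :=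
    hG.comp (measurable_snd.smul (measurable_subtype_coe.comp measurable_fst))
  have hradial : Measurable fun r : ℝ => ∫⁻ x : sphere (0 : E) 1, G (r • (x : E)) ∂μ.toSphere :=
    hG'.lintegral_prod_left'
  calc ∫⁻ x, G x ∂μ = ∫⁻ x : ({0}ᶜ : Set E), G x ∂(μ.comap Subtype.val) := by
        rw [lintegral_subtype_comap (measurableSet_singleton 0).compl, restrict_compl_singleton]
    _ = ∫⁻ q : sphere (0 : E) 1 × Ioi (0 : ℝ), G ((q.2 : ℝ) • (q.1 : E))
          ∂(μ.toSphere.prod (volumeIoiPow (finrank ℝ E - 1))) :=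
        ((μ.measurePreserving_homeomorphUnitSphereProd.symm e).lintegral_comp_emb
          e.symm.measurableEmbedding _).symm
    _ = ∫⁻ r : Ioi (0 : ℝ), ∫⁻ x : sphere (0 : E) 1, G ((r : ℝ) • (x : E)) ∂μ.toSphere
          ∂(volumeIoiPow (finrank ℝ E - 1)) :=
        lintegral_prod_symm' _ (hG'.comp (measurable_fst.prodMk
          (measurable_subtype_coe.comp measurable_snd)))
    _ = _ := by
      rw [volumeIoiPow, ← lintegral_subtype_comap measurableSet_Ioi]
      exact lintegral_withDensity_eq_lintegral_mul _
        (measurable_subtype_coe.pow_const _).ennreal_ofReal (hradial.comp measurable_subtype_coe)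

theorem setLIntegral_Ioo_ofReal_rpow {δ R : ℝ} (hδ : 0 < δ) (hR : 0 ≤ R) :
    ∫⁻ r in Ioo 0 R, ENNReal.ofReal (r ^ (δ - 1)) = ENNReal.ofReal (R ^ δ / δ) := by
  rw [restrict_congr_set Ioo_ae_eq_Ioc, ← ofReal_integral_eq_lintegral_ofReal,
    ← intervalIntegral.integral_of_le hR, integral_rpow (Or.inl (by linarith)), sub_add_cancel,
    Real.zero_rpow hδ.ne', sub_zero]
  · exact (intervalIntegrable_iff_integrableOn_Ioc_of_le hR).mp
      (intervalIntegral.intervalIntegrable_rpow' (by linarith))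
  · filter_upwards [ae_restrict_mem measurableSet_Ioc] with r hr
    exact Real.rpow_nonneg hr.1.le _

theorem setLIntegral_ball_le_of_lintegral_sphere_le (F : E → ℝ≥0∞) (hF : Measurable F)
    {a : ℝ≥0∞} {s R : ℝ} (hs : s < finrank ℝ E) (hR : 0 < R)
    (hsphere : ∀ r : ℝ, 0 < r →
      ∫⁻ x : sphere (0 : E) 1, F (r • (x : E)) ∂μ.toSphere ≤ a * ENNReal.ofReal (r ^ (-s))) :
    ∫⁻ x in ball 0 R, F x ∂μ ≤
      a * ENNReal.ofReal (R ^ (finrank ℝ E - s) / (finrank ℝ E - s)) := by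
  have hd : 1 ≤ finrank ℝ E := finrank_pos
  have hradial : ∀ r ∈ Ioi (0 : ℝ), ENNReal.ofReal (r ^ (finrank ℝ E - 1)) *
      ∫⁻ x : sphere (0 : E) 1, (ball 0 R).indicator F (r • (x : E)) ∂μ.toSphere ≤
      (Iio R).indicator (fun r => a * ENNReal.ofReal (r ^ ((finrank ℝ E : ℝ) - s - 1))) r := by
    intro r (hr : 0 < r)
    rw [lintegral_toSphere_indicator_ball_smul μ F hr,
      ← indicator_mul_right _ fun r : ℝ => ENNReal.ofReal (r ^ (finrank ℝ E - 1))]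
    refine indicator_le_indicator ?_
    calc ENNReal.ofReal (r ^ (finrank ℝ E - 1)) *
          ∫⁻ x : sphere (0 : E) 1, F (r • (x : E)) ∂μ.toSphere
        ≤ ENNReal.ofReal (r ^ (finrank ℝ E - 1)) * (a * ENNReal.ofReal (r ^ (-s))) := by
          gcongr
          exact hsphere r hr
      _ = a * ENNReal.ofReal (r ^ ((finrank ℝ E : ℝ) - s - 1)) := by
          rw [mul_left_comm, ← ENNReal.ofReal_mul (by positivity), ← Real.rpow_natCast,
            ← Real.rpow_add hr, Nat.cast_sub hd]
          ring_nf
  calc ∫⁻ x in ball 0 R, F x ∂μ = ∫⁻ x, (ball 0 R).indicator F x ∂μ :=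
        (lintegral_indicator measurableSet_ball _).symm
    _ = ∫⁻ r in Ioi (0 : ℝ), ENNReal.ofReal (r ^ (finrank ℝ E - 1)) *
          ∫⁻ x : sphere (0 : E) 1, (ball 0 R).indicator F (r • (x : E)) ∂μ.toSphere :=
        lintegral_eq_setLIntegral_Ioi_toSphere μ _ (hF.indicator measurableSet_ball)
    _ ≤ ∫⁻ r in Ioi (0 : ℝ),
          (Iio R).indicator (fun r => a * ENNReal.ofReal (r ^ ((finrank ℝ E : ℝ) - s - 1))) r :=
        setLIntegral_mono' measurableSet_Ioi hradial
    _ = a * ∫⁻ r in Ioo 0 R, ENNReal.ofReal (r ^ ((finrank ℝ E : ℝ) - s - 1)) := by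
        rw [lintegral_indicator measurableSet_Iio, restrict_restrict measurableSet_Iio,
          Iio_inter_Ioi, lintegral_const_mul _ (by fun_prop)]
    _ = _ := by rw [setLIntegral_Ioo_ofReal_rpow (by linarith) hR.le]

end MeasureTheory.Measure

theorem prod_setLIntegral_comp_smul_rpow_le {ι : Type*} [Fintype ι] {E : ι → Type*}
    [∀ J, NormedAddCommGroup (E J)] [∀ J, NormedSpace ℝ (E J)] [∀ J, MeasurableSpace (E J)]
    [∀ J, BorelSpace (E J)] [∀ J, FiniteDimensional ℝ (E J)] (μ : ∀ J, Measure (E J))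
    [∀ J, (μ J).IsAddHaarMeasure] (g : ∀ J, E J → ℝ≥0∞) (s : ∀ J, Set (E J)) {p : ι → ℝ}
    (hp : ∀ J, 0 ≤ p J) {r : ℝ} (hr : 0 < r) :
    ∏ J, (∫⁻ x in s J, g J (r • x) ∂μ J) ^ (1 / p J) ≤
      ENNReal.ofReal (r ^ (-∑ J, (finrank ℝ (E J) : ℝ) / p J)) *
        ∏ J, (∫⁻ x, g J x ∂μ J) ^ (1 / p J) := by
  calc ∏ J, (∫⁻ x in s J, g J (r • x) ∂μ J) ^ (1 / p J)
      ≤ ∏ J, ENNReal.ofReal (r ^ (-(finrank ℝ (E J) * (1 / p J)))) *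
          (∫⁻ x, g J x ∂μ J) ^ (1 / p J) :=
        Finset.prod_le_prod' fun J _ =>
          (μ J).setLIntegral_comp_smul_rpow_le (g J) (s J) hr (one_div_nonneg.2 (hp J))
    _ = _ := by
      rw [Finset.prod_mul_distrib, ← ENNReal.ofReal_prod_of_nonneg fun J _ => by positivity,
        ← Real.rpow_sum_of_pos hr, Finset.sum_neg_distrib]
      simp only [mul_one_div]

theorem stmt_13_general (n m : ℕ) (hn : 2 ≤ n) (C : ℝ) (hC : 0 < C)
    (k : Fin m → ℕ)
    (p : Fin m → ℝ) (hp : ∀ J, 1 ≤ p J)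
    (ι : ∀ J, Fin (k J) → Fin n)
    (hδ : ∑ J, (k J : ℝ) / p J < (n : ℝ)) :
    ∃ C' > (0 : ℝ),
      ∀ f : ∀ J, EuclideanSpace ℝ (Fin (k J)) → ENNReal,
        (∀ J, Measurable (f J)) →
        (∀ ρ : ℝ, 0 < ρ →
          (∫⁻ x' , ∏ J, f J (WithLp.toLp 2 (fun i => ρ *
              ((x' : EuclideanSpace ℝ (Fin n)) (ι J i))))
            ∂(((volume : Measure (EuclideanSpace ℝ (Fin n))).toSphere
                Set.univ)⁻¹ •
              (volume : Measure (EuclideanSpace ℝ (Fin n))).toSphere)) ≤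
            ENNReal.ofReal C *
              ∏ J, (∫⁻ y in ball (0 : EuclideanSpace ℝ (Fin (k J))) 1,
                  f J (ρ • y) ^ p J) ^ (1 / p J)) →
        ∀ R : ℝ, 0 < R →
          ∫⁻ x in ball (0 : EuclideanSpace ℝ (Fin n)) R,
              ∏ J, f J (WithLp.toLp 2 (fun i => x (ι J i))) ≤
            ENNReal.ofReal (C' * R ^ ((n : ℝ) - ∑ J, (k J : ℝ) / p J)) *
              ∏ J, (∫⁻ y, f J y ^ p J) ^ (1 / p J) := by
  have : Nontrivial (EuclideanSpace ℝ (Fin n)) :=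
    Module.nontrivial_of_finrank_pos (R := ℝ) (by rw [finrank_euclideanSpace_fin]; omega)
  set σ := ∑ J, (k J : ℝ) / p J
  set c := (volume : Measure (EuclideanSpace ℝ (Fin n))).toSphere univ
  have hc0 : c ≠ 0 := Measure.measure_univ_ne_zero.2 (Measure.toSphere_ne_zero _)
  have hctop : c ≠ ⊤ := measure_ne_top _ _
  have hδpos : 0 < (n : ℝ) - σ := sub_pos.2 hδ
  refine ⟨c.toReal * C / (n - σ), by have := ENNReal.toReal_pos hc0 hctop; positivity,
    fun f hf hsph R hR => ?_⟩
  set P := ∏ J, (∫⁻ y, f J y ^ p J) ^ (1 / p J)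
  have hF : Measurable fun x : EuclideanSpace ℝ (Fin n) =>
      ∏ J, f J (WithLp.toLp 2 (fun i => x (ι J i))) :=
    by fun_prop
  have hsphere (r : ℝ) (hr : 0 < r) :
      ∫⁻ x : sphere (0 : EuclideanSpace ℝ (Fin n)) 1,
          ∏ J, f J (WithLp.toLp 2 (fun i => (r • (x : EuclideanSpace ℝ (Fin n))) (ι J i)))
          ∂(volume : Measure (EuclideanSpace ℝ (Fin n))).toSphere ≤
        c * ENNReal.ofReal C * P * ENNReal.ofReal (r ^ (-σ)) := by
    have hnormalized := hsph r hr
    rw [lintegral_smul_measure, smul_eq_mul, ENNReal.inv_mul_le_iff hc0 hctop] at hnormalized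
    have hdilates := prod_setLIntegral_comp_smul_rpow_le (fun J => volume)
      (fun J y => f J y ^ p J) (fun J => ball 0 1) (fun J => zero_le_one.trans (hp J)) hr
    simp only [finrank_euclideanSpace_fin] at hdilates
    calc _ ≤ _ := hnormalized
      _ ≤ c * (ENNReal.ofReal C * (ENNReal.ofReal (r ^ (-σ)) * P)) := by gcongr
      _ = _ := by ring
  calc _ ≤ c * ENNReal.ofReal C * P * ENNReal.ofReal (R ^ ((n : ℝ) - σ) / (n - σ)) := by
        simpa only [finrank_euclideanSpace_fin] using
          Measure.setLIntegral_ball_le_of_lintegral_sphere_le _ _ hF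
            (by simpa only [finrank_euclideanSpace_fin] using hδ) hR hsphere
    _ = _ := by
      rw [show c.toReal * C / (n - σ) * R ^ ((n : ℝ) - σ) =
          c.toReal * C * (R ^ ((n : ℝ) - σ) / (n - σ)) by ring,
        ENNReal.ofReal_mul (by positivity), ENNReal.ofReal_mul ENNReal.toReal_nonneg,
        ENNReal.ofReal_toReal hctop]
      ring

/-- From a spherical Brascamp–Lieb inequality to a local Euclidean one: if for
every `ρ > 0` the product of the pullbacks `f_J ∘ π_J` integrated over the unit
sphere (normalized measure) is bounded by `C` times the product of the
`L^{p_J}` norms of the dilates `f_J(ρ·)` on unit balls, and `Σ_J k_J/p_J < n`,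
then integration over the ball `B(0,R)` yields the bound
`C'·R^δ·∏_J ‖f_J‖_{L^{p_J}(ℝ^{k_J})}` with `δ = n − Σ_J k_J/p_J`, for a
constant `C'` depending only on `n`, `C`, and the `p_J`, `k_J`. -/
theorem stmt_13 (n m : ℕ) (hn : 2 ≤ n) (hm : 1 ≤ m) (C : ℝ) (hC : 0 < C)
    (k : Fin m → ℕ) (hk : ∀ J, 1 ≤ k J ∧ k J ≤ n)
    (p : Fin m → ℝ) (hp : ∀ J, 1 ≤ p J)
    (ι : ∀ J, Fin (k J) → Fin n) (hι : ∀ J, Function.Injective (ι J))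
    (hδ : ∑ J, (k J : ℝ) / p J < (n : ℝ)) :
    ∃ C' > (0 : ℝ),
      ∀ f : ∀ J, EuclideanSpace ℝ (Fin (k J)) → ENNReal,
        (∀ J, Measurable (f J)) →
        (∀ ρ : ℝ, 0 < ρ →
          (∫⁻ x' , ∏ J, f J (WithLp.toLp 2 (fun i => ρ *
              ((x' : EuclideanSpace ℝ (Fin n)) (ι J i))))
            ∂(((volume : Measure (EuclideanSpace ℝ (Fin n))).toSphere
                Set.univ)⁻¹ •
              (volume : Measure (EuclideanSpace ℝ (Fin n))).toSphere)) ≤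
            ENNReal.ofReal C *
              ∏ J, (∫⁻ y in ball (0 : EuclideanSpace ℝ (Fin (k J))) 1,
                  f J (ρ • y) ^ p J) ^ (1 / p J)) →
        ∀ R : ℝ, 0 < R →
          ∫⁻ x in ball (0 : EuclideanSpace ℝ (Fin n)) R,
              ∏ J, f J (WithLp.toLp 2 (fun i => x (ι J i))) ≤
            ENNReal.ofReal (C' * R ^ ((n : ℝ) - ∑ J, (k J : ℝ) / p J)) *
              ∏ J, (∫⁻ y, f J y ^ p J) ^ (1 / p J) :=
  stmt_13_general n m hn C hC k p hp ι hδ
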